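/- Let j_c > 0, γ > 1/2, and let Ω ⊆ ℝ³ be a Lebesgue-measurable set. Let f, w : Ω → ℝ³ be measurable with ∫_Ω |f|² dx < ∞ and ∫_Ω |w|² dx < ∞, and define D : Ω → ℝ³ by D(x) = j_c γ w(x) / max_γ{1, γ|f(x)|} − γ c_γ(f(x)) (f(x)·w(x)) Λ_γ(f(x)) / (max_γ{1, γ|f(x)|} |f(x)|) when f(x) ≠ 0 and D(x) = j_c γ w(x) when f(x) = 0. Then the superposition map is Gâteaux differentiable in L²: ∫_Ω |(Λ_γ(f(x) + t w(x)) − Λ_γ(f(x)))/t − D(x)|² dx → 0 as t → 0, t ≠ 0. -/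

import Mathlib

open scoped RealInnerProductSpace Topology
open Classical

/-- Moreau-Yosida regularization of the max-function `x ↦ max{1, x}`. -/
noncomputable def maxReg (γ x : ℝ) : ℝ :=
  if 1 / (2 * γ) ≤ x - 1 then x
  else if x - 1 ≤ -(1 / (2 * γ)) then 1
  else 1 + γ / 2 * (x - 1 + 1 / (2 * γ)) ^ 2

abbrev E3 := EuclideanSpace ℝ (Fin 3)

/-- The regularized dual-variable map `Λ_γ(e) = j_c γ e / max_γ{1, γ|e|}`. -/
noncomputable def Lam (jc γ : ℝ) (e : E3) : E3 :=
  (jc * γ / maxReg γ (γ * ‖e‖)) • e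

/-- The coefficient `c_γ(e)` arising in the derivative of `Λ_γ`. -/
noncomputable def cReg (γ : ℝ) (e : E3) : ℝ :=
  if 1 + 1 / (2 * γ) ≤ γ * ‖e‖ then 1
  else if |γ * ‖e‖ - 1| < 1 / (2 * γ) then γ * (γ * ‖e‖ - 1 + 1 / (2 * γ))
  else 0

/-!
Since `γ > 1/2`, `max_γ{1, γ|e|} = 1` for small `e`, so `Λ_γ` is linear near `0`; away from `0`
it is a composition of `C¹` maps. Hence `Λ_γ` is Fréchet differentiable everywhere, and the
bounds `1 ≤ max_γ{1, s}`, `s ≤ max_γ{1, s}`, `0 ≤ c_γ ≤ 1` give `‖Λ_γ'(e)‖ ≤ 2 |j_c| γ`.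
By the mean value theorem the difference quotients are then dominated by `2 |j_c| γ |w|`,
they converge pointwise to `Λ_γ'(f) w = D`, and dominated convergence concludes.
-/

open MeasureTheory Filter Set

section Superposition

variable {E F : Type*} [NormedAddCommGroup E] [NormedSpace ℝ E]
  [NormedAddCommGroup F] [NormedSpace ℝ F] {Φ : E → F} {Φ' : E → E →L[ℝ] F}

theorem tendsto_slope_of_hasFDerivAt {a : E} {φ : E →L[ℝ] F} (h : HasFDerivAt Φ φ a) (v : E) :
    Tendsto (fun t : ℝ => t⁻¹ • (Φ (a + t • v) - Φ a)) (𝓝[≠] 0) (𝓝 (φ v)) := by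
  have hline : HasDerivAt (fun t : ℝ => a + t • v) v 0 := by
    simpa using ((hasDerivAt_id (0 : ℝ)).smul_const v).const_add a
  have h0 : HasFDerivAt Φ φ (a + (0 : ℝ) • v) := by simpa using h
  simpa [Function.comp_def] using hasDerivAt_iff_tendsto_slope_zero.mp (h0.comp_hasDerivAt 0 hline)

theorem norm_slope_le_of_norm_fderiv_le {C : ℝ} (hΦ : ∀ e, HasFDerivAt Φ (Φ' e) e)
    (hC : ∀ e, ‖Φ' e‖ ≤ C) (a v : E) (t : ℝ) :
    ‖t⁻¹ • (Φ (a + t • v) - Φ a)‖ ≤ C * ‖v‖ := by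
  have hlip : ‖Φ (a + t • v) - Φ a‖ ≤ C * (|t| * ‖v‖) := by
    simpa [norm_smul] using convex_univ.norm_image_sub_le_of_norm_hasFDerivWithin_le
      (fun x _ => (hΦ x).hasFDerivWithinAt) (fun x _ => hC x) (mem_univ a) (mem_univ (a + t • v))
  rcases eq_or_ne t 0 with rfl | ht
  · simpa using mul_nonneg ((norm_nonneg _).trans (hC a)) (norm_nonneg v)
  calc ‖t⁻¹ • (Φ (a + t • v) - Φ a)‖ ≤ |t|⁻¹ * (C * (|t| * ‖v‖)) := by
        rw [norm_smul, norm_inv, Real.norm_eq_abs]; gcongr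
    _ = C * ‖v‖ := by field_simp

theorem tendsto_integral_norm_sq_slope_sub_fderiv {α : Type*} [MeasurableSpace α] {μ : Measure α}
    {C : ℝ} (hΦ : ∀ e, HasFDerivAt Φ (Φ' e) e) (hC : ∀ e, ‖Φ' e‖ ≤ C) {f w : α → E}
    (hf : AEStronglyMeasurable f μ) (hw : AEStronglyMeasurable w μ)
    (hw2 : Integrable (fun x => ‖w x‖ ^ 2) μ) :
    Tendsto (fun t : ℝ => ∫ x, ‖t⁻¹ • (Φ (f x + t • w x) - Φ (f x)) - Φ' (f x) (w x)‖ ^ 2 ∂μ)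
      (𝓝[≠] 0) (𝓝 0) := by
  set slope : ℝ → α → F := fun t x => t⁻¹ • (Φ (f x + t • w x) - Φ (f x))
  have hslope_lim (x : α) : Tendsto (slope · x) (𝓝[≠] 0) (𝓝 (Φ' (f x) (w x))) :=
    tendsto_slope_of_hasFDerivAt (hΦ (f x)) (w x)
  have hΦ_cont : Continuous Φ := continuous_iff_continuousAt.2 fun e => (hΦ e).continuousAt
  have hslope_meas (t : ℝ) : AEStronglyMeasurable (slope t) μ :=
    ((hΦ_cont.comp_aestronglyMeasurable (hf.add (hw.const_smul t))).sub
      (hΦ_cont.comp_aestronglyMeasurable hf)).const_smul _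
  -- the derivative term is measurable as a pointwise limit of the difference quotients
  have hlim_meas : AEStronglyMeasurable (fun x => Φ' (f x) (w x)) μ :=
    aestronglyMeasurable_of_tendsto_ae _ hslope_meas (ae_of_all _ hslope_lim)
  have hbound (t : ℝ) (x : α) :
      ‖‖slope t x - Φ' (f x) (w x)‖ ^ 2‖ ≤ (2 * C) ^ 2 * ‖w x‖ ^ 2 := by
    have h1 := norm_slope_le_of_norm_fderiv_le hΦ hC (f x) (w x) t
    have h2 := (Φ' (f x)).le_of_opNorm_le (hC (f x)) (w x)
    have h3 : ‖slope t x - Φ' (f x) (w x)‖ ≤ 2 * C * ‖w x‖ :=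
      (norm_sub_le _ _).trans (by linarith)
    rw [norm_pow, norm_norm, ← mul_pow]
    exact pow_le_pow_left₀ (norm_nonneg _) h3 2
  have hlim (x : α) : Tendsto (fun t => ‖slope t x - Φ' (f x) (w x)‖ ^ 2) (𝓝[≠] 0) (𝓝 0) := by
    simpa using ((hslope_lim x).sub_const (Φ' (f x) (w x))).norm.pow 2
  simpa only [integral_zero] using tendsto_integral_filter_of_dominated_convergence
    (F := fun t x => ‖slope t x - Φ' (f x) (w x)‖ ^ 2) (f := fun _ => 0) _
    (Eventually.of_forall fun t => ((hslope_meas t).sub hlim_meas).norm.pow 2)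
    (Eventually.of_forall fun t => ae_of_all _ (hbound t)) (hw2.const_mul _)
    (ae_of_all _ hlim)

end Superposition

theorem hasFDerivAt_norm_of_ne_zero {E : Type*} [NormedAddCommGroup E] [InnerProductSpace ℝ E]
    {e : E} (he : e ≠ 0) : HasFDerivAt (fun x : E => ‖x‖) (‖e‖⁻¹ • innerSL ℝ e) e := by
  have h := (hasStrictFDerivAt_norm_sq e).hasFDerivAt.sqrt (pow_ne_zero 2 (norm_ne_zero_iff.2 he))
  simp only [Real.sqrt_sq (norm_nonneg _)] at h
  convert h using 1
  ext v
  simp only [smul_apply, coe_innerSL_apply, smul_eq_mul, one_div, mul_inv_rev, nsmul_eq_mul,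
    Nat.cast_ofNat]
  field_simp

section MaxReg

variable {γ : ℝ}

noncomputable def maxRegDeriv (γ x : ℝ) : ℝ :=
  γ * (max (x - (1 - 1 / (2 * γ))) 0 - max (x - (1 + 1 / (2 * γ))) 0)

theorem maxReg_eq_posPart_sq (hγ : 0 < γ) (x : ℝ) :
    maxReg γ x = 1 + γ / 2 * max (x - (1 - 1 / (2 * γ))) 0 ^ 2
      - γ / 2 * max (x - (1 + 1 / (2 * γ))) 0 ^ 2 := by
  have ha : 0 < 1 / (2 * γ) := by positivity
  unfold maxReg
  split_ifs with h₁ h₂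
  · rw [max_eq_left (by linarith), max_eq_left (by linarith)]
    field_simp
    ring
  · rw [max_eq_right (by linarith), max_eq_right (by linarith)]
    ring
  · rw [max_eq_left (by linarith), max_eq_right (by linarith)]
    ring

theorem hasDerivAt_posPart_sq (s : ℝ) :
    HasDerivAt (fun s : ℝ => max s 0 ^ 2) (2 * max s 0) s := by
  rcases lt_trichotomy s 0 with hs | rfl | hs
  · rw [max_eq_right hs.le, mul_zero]
    refine (hasDerivAt_const s 0).congr_of_eventuallyEq ?_
    filter_upwards [eventually_lt_nhds hs] with y hy
    simp [max_eq_right hy.le]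
  · rw [hasDerivAt_iff_isLittleO_nhds_zero]
    simp only [zero_add, max_self, mul_zero, smul_zero, sub_zero, ne_eq, OfNat.ofNat_ne_zero,
      not_false_eq_true, zero_pow]
    refine (Asymptotics.IsBigO.of_bound 1 (Eventually.of_forall fun y => ?_)).trans_isLittleO
      (Asymptotics.isLittleO_pow_id one_lt_two)
    rw [one_mul, norm_pow, norm_pow]
    refine pow_le_pow_left₀ (norm_nonneg _) ?_ 2
    rw [Real.norm_eq_abs, Real.norm_eq_abs]
    exact abs_le.2 ⟨(neg_nonpos.2 (abs_nonneg y)).trans (le_max_right _ _),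
      max_le (le_abs_self y) (abs_nonneg y)⟩
  · rw [max_eq_left hs.le]
    refine (by simpa using hasDerivAt_pow 2 s : HasDerivAt (fun s : ℝ => s ^ 2) (2 * s) s)
      |>.congr_of_eventuallyEq ?_
    filter_upwards [eventually_gt_nhds hs] with y hy
    rw [max_eq_left hy.le]

theorem hasDerivAt_maxReg (hγ : 0 < γ) (x : ℝ) : HasDerivAt (maxReg γ) (maxRegDeriv γ x) x := by
  have h (c : ℝ) : HasDerivAt (fun x => max (x - c) 0 ^ 2) (2 * max (x - c) 0) x :=
    (hasDerivAt_posPart_sq (x - c)).comp_sub_const x c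
  rw [funext (maxReg_eq_posPart_sq hγ)]
  refine ((((h _).const_mul (γ / 2)).const_add 1).sub ((h _).const_mul (γ / 2))).congr_deriv ?_
  unfold maxRegDeriv
  ring

theorem one_le_maxReg (hγ : 0 < γ) (x : ℝ) : 1 ≤ maxReg γ x := by
  have ha : 0 < 1 / (2 * γ) := by positivity
  unfold maxReg
  split_ifs <;> nlinarith

theorem le_maxReg (hγ : 0 < γ) (x : ℝ) : x ≤ maxReg γ x := by
  have ha : γ * (1 / (2 * γ)) = 1 / 2 := by field_simp
  unfold maxReg
  split_ifs with h₁ h₂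
  · exact le_rfl
  · linarith
  · nlinarith [sq_nonneg (γ * (x - 1) - 1 / 2), sq_nonneg (x - 1 + 1 / (2 * γ))]

theorem maxReg_eq_one_of_le (hγ : 0 < γ) {x : ℝ} (hx : x ≤ 1 - 1 / (2 * γ)) : maxReg γ x = 1 := by
  have ha : 0 < 1 / (2 * γ) := by positivity
  unfold maxReg
  rw [if_neg (by linarith), if_pos (by linarith)]

theorem maxRegDeriv_nonneg (hγ : 0 < γ) (x : ℝ) : 0 ≤ maxRegDeriv γ x := by
  have ha : 0 < 1 / (2 * γ) := by positivity
  have : max (x - (1 + 1 / (2 * γ))) 0 ≤ max (x - (1 - 1 / (2 * γ))) 0 :=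
    max_le_max (by linarith) le_rfl
  unfold maxRegDeriv
  nlinarith

theorem maxRegDeriv_le_one (hγ : 0 < γ) (x : ℝ) : maxRegDeriv γ x ≤ 1 := by
  have h : max (x - (1 - 1 / (2 * γ))) 0 ≤ max (x - (1 + 1 / (2 * γ))) 0 + 2 * (1 / (2 * γ)) :=
    max_le (by linarith [le_max_left (x - (1 + 1 / (2 * γ))) 0])
      (by linarith [le_max_right (x - (1 + 1 / (2 * γ))) 0, (by positivity : 0 < 1 / (2 * γ))])
  have h2 : γ * (2 * (1 / (2 * γ))) = 1 := by field_simp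
  unfold maxRegDeriv
  nlinarith

theorem cReg_eq_maxRegDeriv (hγ : 0 < γ) (e : E3) : cReg γ e = maxRegDeriv γ (γ * ‖e‖) := by
  have ha : 0 < 1 / (2 * γ) := by positivity
  unfold cReg maxRegDeriv
  split_ifs with h₁ h₂
  · rw [max_eq_left (by linarith), max_eq_left (by linarith)]
    field_simp
    ring
  · rw [abs_lt] at h₂
    rw [max_eq_left (by linarith), max_eq_right (by linarith)]
    ring
  · have : γ * ‖e‖ ≤ 1 - 1 / (2 * γ) := by
      rcases le_abs'.1 (not_lt.1 h₂) with h | h <;> linarith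
    rw [max_eq_right (by linarith), max_eq_right (by linarith)]
    ring

end MaxReg

section Lam

variable {jc γ : ℝ}

-- At `e = 0` the division by `‖e‖` is Lean's `x / 0 = 0`; the rank-one term vanishes there anyway.
noncomputable def LamDeriv (jc γ : ℝ) (e : E3) : E3 →L[ℝ] E3 :=
  (jc * γ / maxReg γ (γ * ‖e‖)) • (ContinuousLinearMap.id ℝ E3
    - (γ * cReg γ e / (maxReg γ (γ * ‖e‖) * ‖e‖)) • (innerSL ℝ e).smulRight e)

theorem LamDeriv_zero (hγ : 1 / 2 < γ) :
    LamDeriv jc γ 0 = (jc * γ) • ContinuousLinearMap.id ℝ E3 := by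
  have hγ0 : 0 < γ := by linarith
  have h : (0 : ℝ) ≤ 1 - 1 / (2 * γ) := by
    rw [sub_nonneg, div_le_one (by positivity)]; linarith
  simp [LamDeriv, maxReg_eq_one_of_le hγ0 h]

theorem LamDeriv_apply (hγ : 1 / 2 < γ) (e v : E3) :
    LamDeriv jc γ e v = if e = 0 then (jc * γ) • v
      else (jc * γ / maxReg γ (γ * ‖e‖)) • v
        - (γ * cReg γ e * ⟪e, v⟫ / (maxReg γ (γ * ‖e‖) * ‖e‖)) • Lam jc γ e := by
  split_ifs with he
  · simp [he, LamDeriv_zero hγ]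
  · simp only [LamDeriv, Lam, smul_apply, sub_apply,
      ContinuousLinearMap.id_apply, ContinuousLinearMap.smulRight_apply, innerSL_apply_apply,
      smul_sub, smul_smul]
    congr 2
    ring

theorem hasFDerivAt_Lam (hγ : 1 / 2 < γ) (e : E3) : HasFDerivAt (Lam jc γ) (LamDeriv jc γ e) e := by
  have hγ0 : 0 < γ := by linarith
  rcases eq_or_ne e 0 with rfl | he
  · rw [LamDeriv_zero hγ]
    have hr : 0 < (1 - 1 / (2 * γ)) / γ :=
      div_pos (by rw [sub_pos, div_lt_one (by positivity)]; linarith) hγ0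
    refine ((jc * γ) • ContinuousLinearMap.id ℝ E3).hasFDerivAt.congr_of_eventuallyEq ?_
    filter_upwards [Metric.ball_mem_nhds (0 : E3) hr] with x hx
    rw [mem_ball_zero_iff, lt_div_iff₀ hγ0] at hx
    simp [Lam, maxReg_eq_one_of_le hγ0 (by linarith : γ * ‖x‖ ≤ 1 - 1 / (2 * γ))]
  have hm : maxReg γ (γ * ‖e‖) ≠ 0 := (zero_lt_one.trans_le (one_le_maxReg hγ0 _)).ne'
  have hscal := (hasDerivAt_const ‖e‖ (jc * γ)).div
    ((hasDerivAt_maxReg hγ0 _).comp ‖e‖ ((hasDerivAt_id _).const_mul γ)) hm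
  refine ((hscal.comp_hasFDerivAt e (hasFDerivAt_norm_of_ne_zero he)).smul
    (hasFDerivAt_id e)).congr_fderiv ?_
  ext v : 1
  simp only [Function.comp_apply, Pi.div_apply, id_eq, zero_mul, mul_one, zero_sub, add_apply,
    smul_apply, sub_apply, ContinuousLinearMap.id_apply, ContinuousLinearMap.smulRight_apply,
    coe_innerSL_apply, smul_eq_mul, LamDeriv, cReg_eq_maxRegDeriv hγ0]
  module

theorem norm_LamDeriv_le (hγ : 0 < γ) (e : E3) : ‖LamDeriv jc γ e‖ ≤ 2 * (|jc| * γ) := by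
  set m := maxReg γ (γ * ‖e‖)
  have hm1 : 1 ≤ m := one_le_maxReg hγ _
  have hscal : ‖jc * γ / m‖ ≤ |jc| * γ := by
    rw [Real.norm_eq_abs, abs_div, abs_mul, abs_of_pos hγ, abs_of_pos (by linarith : 0 < m)]
    exact div_le_self (by positivity) hm1
  have hproj : ‖(γ * cReg γ e / (m * ‖e‖)) • (innerSL ℝ e).smulRight e‖ ≤ 1 := by
    rcases eq_or_ne e 0 with rfl | he
    · simp
    have hc0 : 0 ≤ cReg γ e := cReg_eq_maxRegDeriv hγ e ▸ maxRegDeriv_nonneg hγ _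
    have hc1 : cReg γ e ≤ 1 := cReg_eq_maxRegDeriv hγ e ▸ maxRegDeriv_le_one hγ _
    have hce : γ * cReg γ e * ‖e‖ ≤ m := calc
      γ * cReg γ e * ‖e‖ ≤ γ * ‖e‖ := by
        nlinarith [mul_nonneg (mul_nonneg hγ.le (norm_nonneg e)) (sub_nonneg.2 hc1)]
      _ ≤ m := le_maxReg hγ _
    have he' : 0 < ‖e‖ := norm_pos_iff.2 he
    rw [norm_smul, ContinuousLinearMap.norm_smulRight_apply, innerSL_apply_norm, Real.norm_eq_abs,
      abs_of_nonneg (by positivity), div_mul_eq_mul_div, div_le_one (by positivity)]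
    nlinarith
  calc ‖LamDeriv jc γ e‖
      ≤ ‖jc * γ / m‖ * (‖ContinuousLinearMap.id ℝ E3‖
        + ‖(γ * cReg γ e / (m * ‖e‖)) • (innerSL ℝ e).smulRight e‖) := by
        unfold LamDeriv
        exact (ContinuousLinearMap.opNorm_smul_le _ _).trans (by gcongr; exact norm_sub_le _ _)
    _ ≤ (|jc| * γ) * (1 + 1) := by
        gcongr
        exact ContinuousLinearMap.norm_id_le
    _ = 2 * (|jc| * γ) := by ring

end Lam

theorem Lam_superposition_gateaux_general (jc γ : ℝ) (hγ : 1 / 2 < γ)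
    (Ω : Set E3) (f w : E3 → E3)
    (hf : Measurable f) (hw : Measurable w)
    (hw2 : MeasureTheory.IntegrableOn (fun x => ‖w x‖ ^ 2) Ω)
    (D : E3 → E3)
    (hD : ∀ x : E3, D x =
      if f x = 0 then (jc * γ) • w x
      else
        (jc * γ / maxReg γ (γ * ‖f x‖)) • w x
          - (γ * cReg γ (f x) * ⟪f x, w x⟫ /
              (maxReg γ (γ * ‖f x‖) * ‖f x‖)) • Lam jc γ (f x)) :
    Filter.Tendsto
      (fun t : ℝ =>
        ∫ x in Ω, ‖t⁻¹ • (Lam jc γ (f x + t • w x) - Lam jc γ (f x)) - D x‖ ^ 2)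
      (𝓝[≠] (0 : ℝ)) (𝓝 0) := by
  obtain rfl : D = fun x => LamDeriv jc γ (f x) (w x) :=
    funext fun x => (hD x).trans (LamDeriv_apply hγ (f x) (w x)).symm
  exact tendsto_integral_norm_sq_slope_sub_fderiv (hasFDerivAt_Lam hγ)
    (norm_LamDeriv_le (by linarith)) hf.aestronglyMeasurable hw.aestronglyMeasurable hw2

/-- Gâteaux differentiability in L² of the superposition map of `Λ_γ`: the
difference quotients converge in L²(Ω) to the pointwise derivative `D`. -/
theorem Lam_superposition_gateaux (jc γ : ℝ) (hjc : 0 < jc) (hγ : 1 / 2 < γ)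
    (Ω : Set E3) (hΩ : MeasurableSet Ω) (f w : E3 → E3)
    (hf : Measurable f) (hw : Measurable w)
    (hf2 : MeasureTheory.IntegrableOn (fun x => ‖f x‖ ^ 2) Ω)
    (hw2 : MeasureTheory.IntegrableOn (fun x => ‖w x‖ ^ 2) Ω)
    (D : E3 → E3)
    (hD : ∀ x : E3, D x =
      if f x = 0 then (jc * γ) • w x
      else
        (jc * γ / maxReg γ (γ * ‖f x‖)) • w x
          - (γ * cReg γ (f x) * ⟪f x, w x⟫ /
              (maxReg γ (γ * ‖f x‖) * ‖f x‖)) • Lam jc γ (f x)) :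
    Filter.Tendsto
      (fun t : ℝ =>
        ∫ x in Ω, ‖t⁻¹ • (Lam jc γ (f x + t • w x) - Lam jc γ (f x)) - D x‖ ^ 2)
      (𝓝[≠] (0 : ℝ)) (𝓝 0) :=
  Lam_superposition_gateaux_general jc γ hγ Ω f w hf hw hw2 D hD
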